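/- Let A, X, Y, G be jointly distributed random variables on a probability space, each taking values in a finite nonempty set. If I[X : G] = 0 and I[A : Y | G] = 0, then I[A : X | Y] = 0 and I[A : Y | X] = 0 together imply I[A : (X, Y)] = 0 (conditional Ingleton criterion for Intersection, case (ii)). -/

import Mathlib

open MeasureTheory ProbabilityTheory

/-- Shannon entropy (natural logarithm) of a random variable with values in a
finite set, computed from its distribution under `μ`. -/
noncomputable def Hshannon {Ω : Type*} [MeasurableSpace Ω] (μ : Measure Ω)
    {S : Type*} [Fintype S] (X : Ω → S) : ℝ :=
  ∑ x : S, Real.negMulLog (μ (X ⁻¹' {x})).toReal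

/-- Conditional entropy `H[X | Y] = H[X, Y] - H[Y]`. -/
noncomputable def condH {Ω : Type*} [MeasurableSpace Ω] (μ : Measure Ω)
    {S T : Type*} [Fintype S] [Fintype T] (X : Ω → S) (Y : Ω → T) : ℝ :=
  Hshannon μ (fun ω => (X ω, Y ω)) - Hshannon μ Y

/-- Mutual information `I[X : Y] = H[X] + H[Y] - H[X, Y]`. -/
noncomputable def mutInfo {Ω : Type*} [MeasurableSpace Ω] (μ : Measure Ω)
    {S T : Type*} [Fintype S] [Fintype T] (X : Ω → S) (Y : Ω → T) : ℝ :=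
  Hshannon μ X + Hshannon μ Y - Hshannon μ (fun ω => (X ω, Y ω))

/-- Conditional mutual information
`I[X : Y | Z] = H[X, Z] + H[Y, Z] - H[X, Y, Z] - H[Z]`. -/
noncomputable def cmi {Ω : Type*} [MeasurableSpace Ω] (μ : Measure Ω)
    {S T U : Type*} [Fintype S] [Fintype T] [Fintype U]
    (X : Ω → S) (Y : Ω → T) (Z : Ω → U) : ℝ :=
  Hshannon μ (fun ω => (X ω, Z ω)) + Hshannon μ (fun ω => (Y ω, Z ω))
    - Hshannon μ (fun ω => (X ω, Y ω, Z ω)) - Hshannon μ Z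

set_option linter.unusedSectionVars false
open Finset



lemma gibbs_pt {p q : ℝ} (hp : 0 ≤ p) (hq : 0 ≤ q) (hsupp : q = 0 → p = 0) :
    p - q ≤ p * (Real.log p - Real.log q) := by
  rcases eq_or_lt_of_le hp with h | h
  · simp [← h]; exact hq
  · have hq0 : 0 < q := lt_of_le_of_ne hq (by intro h0; exact absurd (hsupp h0.symm) (ne_of_gt h))
    have hlog : Real.log (q / p) ≤ q / p - 1 := Real.log_le_sub_one_of_pos (by positivity)
    rw [Real.log_div (ne_of_gt hq0) (ne_of_gt h)] at hlog
    have := mul_le_mul_of_nonneg_left hlog hp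
    have hqp : p * (q / p) = q := by field_simp
    nlinarith

lemma gibbs_pt_lt {p q : ℝ} (hp : 0 ≤ p) (hq : 0 ≤ q) (hsupp : q = 0 → p = 0)
    (hne : p ≠ q) : p - q < p * (Real.log p - Real.log q) := by
  rcases eq_or_lt_of_le hp with h | h
  · have hq0 : 0 < q := lt_of_le_of_ne hq (fun h0 => hne (by rw [← h, ← h0]))
    simp [← h]; exact hq0
  · have hq0 : 0 < q := lt_of_le_of_ne hq (by intro h0; exact absurd (hsupp h0.symm) (ne_of_gt h))
    have hne1 : q / p ≠ 1 := by
      intro h1; exact hne (by field_simp at h1; linarith)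
    have hlog : Real.log (q / p) < q / p - 1 := Real.log_lt_sub_one_of_pos (by positivity) hne1
    rw [Real.log_div (ne_of_gt hq0) (ne_of_gt h)] at hlog
    have := mul_lt_mul_of_pos_left hlog h
    have hqp : p * (q / p) = q := by field_simp
    nlinarith

lemma gibbs_eq {ι : Type*} [Fintype ι] (p q : ι → ℝ) (hp : ∀ i, 0 ≤ p i)
    (hq : ∀ i, 0 ≤ q i) (hsupp : ∀ i, q i = 0 → p i = 0)
    (hsum : ∑ i, q i ≤ ∑ i, p i)
    (h0 : ∑ i, p i * (Real.log (p i) - Real.log (q i)) = 0) :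
    ∀ i, p i = q i := by
  set d : ι → ℝ := fun i => p i * (Real.log (p i) - Real.log (q i)) - (p i - q i) with hd
  have hdn : ∀ i ∈ univ, 0 ≤ d i := fun i _ => sub_nonneg.2 (gibbs_pt (hp i) (hq i) (hsupp i))
  have hsd : ∑ i, d i ≤ 0 := by
    simp only [hd, Finset.sum_sub_distrib, h0]
    linarith
  have hall : ∀ i ∈ univ, d i = 0 := by
    rw [← Finset.sum_eq_zero_iff_of_nonneg hdn]
    exact le_antisymm hsd (Finset.sum_nonneg hdn)
  intro i
  by_contra hne
  have h1 := gibbs_pt_lt (hp i) (hq i) (hsupp i) hne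
  have h2 := hall i (mem_univ i)
  simp only [hd] at h2
  linarith

section plumbing
variable {Ω : Type*} [MeasurableSpace Ω] (μ : Measure Ω) [IsProbabilityMeasure μ]

lemma pre2 {S T : Type*} [MeasurableSpace S] [MeasurableSpace T]
    (X : Ω → S) (Y : Ω → T) (x : S) (y : T) :
    (fun ω => (X ω, Y ω)) ⁻¹' {(x, y)} = X ⁻¹' {x} ∩ Y ⁻¹' {y} := by
  ext ω; simp [Prod.ext_iff]

lemma toReal_fiber_sum {T : Type*} [Fintype T] [MeasurableSpace T] [MeasurableSingletonClass T]
    {s : Set Ω} (hs : MeasurableSet s) {W : Ω → T} (hW : Measurable W) :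
    (μ s).toReal = ∑ t : T, (μ (s ∩ W ⁻¹' {t})).toReal := by
  rw [← ENNReal.toReal_sum (fun _ _ => measure_ne_top μ _)]
  congr 1
  have hu : s = ⋃ t ∈ (univ : Finset T), s ∩ W ⁻¹' {t} := by
    ext ω; simp
  have hdisj : (↑(univ : Finset T) : Set T).PairwiseDisjoint (fun t => s ∩ W ⁻¹' {t}) := by
    intro i _ j _ hij
    simp only [Function.onFun, Set.disjoint_left]
    rintro ω ⟨-, hi⟩ ⟨-, hj⟩
    exact hij (by simp only [Set.mem_preimage, Set.mem_singleton_iff] at hi hj; rw [← hi, hj])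
  conv_lhs => rw [hu]
  exact measure_biUnion_finset hdisj (fun t _ => hs.inter (hW (measurableSet_singleton t)))

lemma toReal_mass {T : Type*} [Fintype T] [MeasurableSpace T] [MeasurableSingletonClass T]
    {W : Ω → T} (hW : Measurable W) : ∑ t : T, (μ (W ⁻¹' {t})).toReal = 1 := by
  have h := toReal_fiber_sum μ MeasurableSet.univ hW
  simp only [Set.univ_inter] at h
  rw [← h, measure_univ, ENNReal.toReal_one]

lemma toReal_dom {s u : Set Ω} (h : s ⊆ u) : (μ s).toReal ≤ (μ u).toReal :=
  ENNReal.toReal_mono (measure_ne_top μ _) (measure_mono h)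

end plumbing
section repr
variable {Ω : Type*} [MeasurableSpace Ω] (μ : Measure Ω) [IsProbabilityMeasure μ]
variable {S T U : Type*}
  [Fintype S] [MeasurableSpace S] [MeasurableSingletonClass S]
  [Fintype T] [MeasurableSpace T] [MeasurableSingletonClass T]
  [Fintype U] [MeasurableSpace U] [MeasurableSingletonClass U]

lemma pre3 (X : Ω → S) (Y : Ω → T) (Z : Ω → U) (x : S) (y : T) (z : U) :
    (fun ω => (X ω, Y ω, Z ω)) ⁻¹' {(x, y, z)} = X ⁻¹' {x} ∩ (Y ⁻¹' {y} ∩ Z ⁻¹' {z}) := by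
  ext ω; simp [Prod.ext_iff, and_assoc]

lemma mutInfo_repr (X : Ω → S) (Y : Ω → T) (hX : Measurable X) (hY : Measurable Y) :
    mutInfo μ X Y = ∑ x : S, ∑ y : T,
      (μ (X ⁻¹' {x} ∩ Y ⁻¹' {y})).toReal *
        (Real.log (μ (X ⁻¹' {x} ∩ Y ⁻¹' {y})).toReal
          - Real.log ((μ (X ⁻¹' {x})).toReal * (μ (Y ⁻¹' {y})).toReal)) := by
  have hXm : ∀ x : S, MeasurableSet (X ⁻¹' {x}) := fun x => hX (measurableSet_singleton x)
  have hYm : ∀ y : T, MeasurableSet (Y ⁻¹' {y}) := fun y => hY (measurableSet_singleton y)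
  have hfx : ∀ x, (μ (X ⁻¹' {x})).toReal = ∑ y, (μ (X ⁻¹' {x} ∩ Y ⁻¹' {y})).toReal :=
    fun x => toReal_fiber_sum μ (hXm x) hY
  have hfy : ∀ y, (μ (Y ⁻¹' {y})).toReal = ∑ x, (μ (X ⁻¹' {x} ∩ Y ⁻¹' {y})).toReal := by
    intro y
    rw [toReal_fiber_sum μ (hYm y) hX]
    exact Finset.sum_congr rfl fun x _ => by rw [Set.inter_comm]
  have e1 : Hshannon μ X
      = ∑ x, ∑ y, -((μ (X ⁻¹' {x} ∩ Y ⁻¹' {y})).toReal * Real.log (μ (X ⁻¹' {x})).toReal) := by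
    unfold Hshannon
    refine Finset.sum_congr rfl fun x _ => ?_
    rw [Real.negMulLog, neg_mul]
    rw [show (μ (X ⁻¹' {x})).toReal * Real.log (μ (X ⁻¹' {x})).toReal
        = ∑ y, (μ (X ⁻¹' {x} ∩ Y ⁻¹' {y})).toReal * Real.log (μ (X ⁻¹' {x})).toReal from by
      rw [← Finset.sum_mul]
      exact congrArg (fun t => t * Real.log (μ (X ⁻¹' {x})).toReal) (hfx x)]
    rw [Finset.sum_neg_distrib]
  have e2 : Hshannon μ Y
      = ∑ x, ∑ y, -((μ (X ⁻¹' {x} ∩ Y ⁻¹' {y})).toReal * Real.log (μ (Y ⁻¹' {y})).toReal) := by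
    unfold Hshannon
    rw [Finset.sum_comm]
    refine Finset.sum_congr rfl fun y _ => ?_
    rw [Real.negMulLog, neg_mul]
    rw [show (μ (Y ⁻¹' {y})).toReal * Real.log (μ (Y ⁻¹' {y})).toReal
        = ∑ x, (μ (X ⁻¹' {x} ∩ Y ⁻¹' {y})).toReal * Real.log (μ (Y ⁻¹' {y})).toReal from by
      rw [← Finset.sum_mul]
      exact congrArg (fun t => t * Real.log (μ (Y ⁻¹' {y})).toReal) (hfy y)]
    rw [Finset.sum_neg_distrib]
  have e3 : Hshannon μ (fun ω => (X ω, Y ω))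
      = ∑ x, ∑ y, Real.negMulLog (μ (X ⁻¹' {x} ∩ Y ⁻¹' {y})).toReal := by
    unfold Hshannon
    rw [Fintype.sum_prod_type]
    exact Finset.sum_congr rfl fun x _ => Finset.sum_congr rfl fun y _ => by rw [pre2]
  rw [mutInfo, e1, e2, e3, ← Finset.sum_add_distrib, ← Finset.sum_sub_distrib]
  refine Finset.sum_congr rfl fun x _ => ?_
  rw [← Finset.sum_add_distrib, ← Finset.sum_sub_distrib]
  refine Finset.sum_congr rfl fun y _ => ?_
  rcases eq_or_lt_of_le (ENNReal.toReal_nonneg :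
      (0:ℝ) ≤ (μ (X ⁻¹' {x} ∩ Y ⁻¹' {y})).toReal) with h | h
  · rw [Real.negMulLog, ← h]; ring
  · have hdx : 0 < (μ (X ⁻¹' {x})).toReal :=
      lt_of_lt_of_le h (toReal_dom μ Set.inter_subset_left)
    have hdy : 0 < (μ (Y ⁻¹' {y})).toReal :=
      lt_of_lt_of_le h (toReal_dom μ Set.inter_subset_right)
    rw [Real.negMulLog, Real.log_mul (ne_of_gt hdx) (ne_of_gt hdy)]
    ring

lemma mutInfo_fact (X : Ω → S) (Y : Ω → T) (hX : Measurable X) (hY : Measurable Y)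
    (h : mutInfo μ X Y = 0) :
    ∀ x y, (μ (X ⁻¹' {x} ∩ Y ⁻¹' {y})).toReal
      = (μ (X ⁻¹' {x})).toReal * (μ (Y ⁻¹' {y})).toReal := by
  have key := gibbs_eq (ι := S × T)
    (fun p => (μ (X ⁻¹' {p.1} ∩ Y ⁻¹' {p.2})).toReal)
    (fun p => (μ (X ⁻¹' {p.1})).toReal * (μ (Y ⁻¹' {p.2})).toReal)
    (fun _ => ENNReal.toReal_nonneg)
    (fun _ => mul_nonneg ENNReal.toReal_nonneg ENNReal.toReal_nonneg)
    ?_ ?_ ?_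
  · exact fun x y => key (x, y)
  · rintro ⟨x, y⟩ hq
    rcases mul_eq_zero.1 hq with h0 | h0
    · exact le_antisymm (h0 ▸ toReal_dom μ Set.inter_subset_left) ENNReal.toReal_nonneg
    · exact le_antisymm (h0 ▸ toReal_dom μ Set.inter_subset_right) ENNReal.toReal_nonneg
  · rw [Fintype.sum_prod_type]
    have lhs : ∑ x : S, ∑ y : T, (μ (X ⁻¹' {x})).toReal * (μ (Y ⁻¹' {y})).toReal = 1 := by
      rw [← Finset.sum_mul_sum, toReal_mass μ hX, toReal_mass μ hY, one_mul]
    rw [lhs]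
    have rhs : ∑ p : S × T, (μ (X ⁻¹' {p.1} ∩ Y ⁻¹' {p.2})).toReal = 1 := by
      rw [Fintype.sum_prod_type]
      have : ∀ x, ∑ y, (μ (X ⁻¹' {x} ∩ Y ⁻¹' {y})).toReal = (μ (X ⁻¹' {x})).toReal :=
        fun x => (toReal_fiber_sum μ (hX (measurableSet_singleton x)) hY).symm
      rw [Finset.sum_congr rfl fun x _ => this x, toReal_mass μ hX]
    rw [rhs]
  · rw [Fintype.sum_prod_type]
    rw [← mutInfo_repr μ X Y hX hY]
    exact h

lemma mutInfo_zero_of_fact (X : Ω → S) (Y : Ω → T) (hX : Measurable X) (hY : Measurable Y)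
    (h : ∀ x y, (μ (X ⁻¹' {x} ∩ Y ⁻¹' {y})).toReal
      = (μ (X ⁻¹' {x})).toReal * (μ (Y ⁻¹' {y})).toReal) :
    mutInfo μ X Y = 0 := by
  rw [mutInfo_repr μ X Y hX hY]
  refine Finset.sum_eq_zero fun x _ => Finset.sum_eq_zero fun y _ => ?_
  rw [h x y]
  simp

end repr
section cmirepr
variable {Ω : Type*} [MeasurableSpace Ω] (μ : Measure Ω) [IsProbabilityMeasure μ]
variable {S T U : Type*}
  [Fintype S] [MeasurableSpace S] [MeasurableSingletonClass S]
  [Fintype T] [MeasurableSpace T] [MeasurableSingletonClass T]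
  [Fintype U] [MeasurableSpace U] [MeasurableSingletonClass U]
  (X : Ω → S) (Y : Ω → T) (Z : Ω → U)

lemma cmi_repr (hX : Measurable X) (hY : Measurable Y) (hZ : Measurable Z) :
    cmi μ X Y Z = ∑ x : S, ∑ y : T, ∑ z : U,
      (μ (X ⁻¹' {x} ∩ (Y ⁻¹' {y} ∩ Z ⁻¹' {z}))).toReal *
        (Real.log (μ (X ⁻¹' {x} ∩ (Y ⁻¹' {y} ∩ Z ⁻¹' {z}))).toReal
          - Real.log ((μ (X ⁻¹' {x} ∩ Z ⁻¹' {z})).toReal * (μ (Y ⁻¹' {y} ∩ Z ⁻¹' {z})).toReal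
              * ((μ (Z ⁻¹' {z})).toReal)⁻¹)) := by
  have hXm : ∀ x : S, MeasurableSet (X ⁻¹' {x}) := fun x => hX (measurableSet_singleton x)
  have hYm : ∀ y : T, MeasurableSet (Y ⁻¹' {y}) := fun y => hY (measurableSet_singleton y)
  have hZm : ∀ z : U, MeasurableSet (Z ⁻¹' {z}) := fun z => hZ (measurableSet_singleton z)
  -- marginal expansions
  have hXZ : ∀ x z, (μ (X ⁻¹' {x} ∩ Z ⁻¹' {z})).toReal
      = ∑ y, (μ (X ⁻¹' {x} ∩ (Y ⁻¹' {y} ∩ Z ⁻¹' {z}))).toReal := by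
    intro x z
    rw [toReal_fiber_sum μ ((hXm x).inter (hZm z)) hY]
    refine Finset.sum_congr rfl fun y _ => ?_
    congr 2
    ext ω; simp only [Set.mem_inter_iff, Set.mem_preimage]; tauto
  have hYZ : ∀ y z, (μ (Y ⁻¹' {y} ∩ Z ⁻¹' {z})).toReal
      = ∑ x, (μ (X ⁻¹' {x} ∩ (Y ⁻¹' {y} ∩ Z ⁻¹' {z}))).toReal := by
    intro y z
    rw [toReal_fiber_sum μ ((hYm y).inter (hZm z)) hX]
    refine Finset.sum_congr rfl fun x _ => ?_
    congr 2
    ext ω; simp only [Set.mem_inter_iff, Set.mem_preimage]; tauto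
  have hZZ : ∀ z, (μ (Z ⁻¹' {z})).toReal = ∑ y, (μ (Y ⁻¹' {y} ∩ Z ⁻¹' {z})).toReal := by
    intro z
    rw [toReal_fiber_sum μ (hZm z) hY]
    exact Finset.sum_congr rfl fun y _ => by rw [Set.inter_comm]
  have e1 : Hshannon μ (fun ω => (X ω, Z ω)) = ∑ x, ∑ y, ∑ z,
      -((μ (X ⁻¹' {x} ∩ (Y ⁻¹' {y} ∩ Z ⁻¹' {z}))).toReal
        * Real.log (μ (X ⁻¹' {x} ∩ Z ⁻¹' {z})).toReal) := by
    unfold Hshannon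
    rw [Fintype.sum_prod_type]
    refine Finset.sum_congr rfl fun x _ => ?_
    rw [Finset.sum_comm]
    refine Finset.sum_congr rfl fun z _ => ?_
    rw [pre2, Real.negMulLog, neg_mul]
    rw [show (μ (X ⁻¹' {x} ∩ Z ⁻¹' {z})).toReal * Real.log (μ (X ⁻¹' {x} ∩ Z ⁻¹' {z})).toReal
        = ∑ y, (μ (X ⁻¹' {x} ∩ (Y ⁻¹' {y} ∩ Z ⁻¹' {z}))).toReal
            * Real.log (μ (X ⁻¹' {x} ∩ Z ⁻¹' {z})).toReal from by
      rw [← Finset.sum_mul]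
      exact congrArg (fun t => t * Real.log (μ (X ⁻¹' {x} ∩ Z ⁻¹' {z})).toReal) (hXZ x z)]
    rw [Finset.sum_neg_distrib]
  have e2 : Hshannon μ (fun ω => (Y ω, Z ω)) = ∑ x, ∑ y, ∑ z,
      -((μ (X ⁻¹' {x} ∩ (Y ⁻¹' {y} ∩ Z ⁻¹' {z}))).toReal
        * Real.log (μ (Y ⁻¹' {y} ∩ Z ⁻¹' {z})).toReal) := by
    have step : Hshannon μ (fun ω => (Y ω, Z ω)) = ∑ y, ∑ z, ∑ x,
        -((μ (X ⁻¹' {x} ∩ (Y ⁻¹' {y} ∩ Z ⁻¹' {z}))).toReal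
          * Real.log (μ (Y ⁻¹' {y} ∩ Z ⁻¹' {z})).toReal) := by
      unfold Hshannon
      rw [Fintype.sum_prod_type]
      refine Finset.sum_congr rfl fun y _ => Finset.sum_congr rfl fun z _ => ?_
      rw [pre2, Real.negMulLog, neg_mul]
      rw [show (μ (Y ⁻¹' {y} ∩ Z ⁻¹' {z})).toReal * Real.log (μ (Y ⁻¹' {y} ∩ Z ⁻¹' {z})).toReal
          = ∑ x, (μ (X ⁻¹' {x} ∩ (Y ⁻¹' {y} ∩ Z ⁻¹' {z}))).toReal
              * Real.log (μ (Y ⁻¹' {y} ∩ Z ⁻¹' {z})).toReal from by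
        rw [← Finset.sum_mul]
        exact congrArg (fun t => t * Real.log (μ (Y ⁻¹' {y} ∩ Z ⁻¹' {z})).toReal) (hYZ y z)]
      rw [Finset.sum_neg_distrib]
    rw [step]
    exact (Finset.sum_congr rfl fun y _ => Finset.sum_comm).trans Finset.sum_comm
  have e4 : Hshannon μ Z = ∑ x, ∑ y, ∑ z,
      -((μ (X ⁻¹' {x} ∩ (Y ⁻¹' {y} ∩ Z ⁻¹' {z}))).toReal
        * Real.log (μ (Z ⁻¹' {z})).toReal) := by
    have step : Hshannon μ Z = ∑ z, ∑ y, ∑ x,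
        -((μ (X ⁻¹' {x} ∩ (Y ⁻¹' {y} ∩ Z ⁻¹' {z}))).toReal
          * Real.log (μ (Z ⁻¹' {z})).toReal) := by
      unfold Hshannon
      refine Finset.sum_congr rfl fun z _ => ?_
      have inner : (∑ y, ∑ x, (μ (X ⁻¹' {x} ∩ (Y ⁻¹' {y} ∩ Z ⁻¹' {z}))).toReal
            * Real.log (μ (Z ⁻¹' {z})).toReal)
          = (μ (Z ⁻¹' {z})).toReal * Real.log (μ (Z ⁻¹' {z})).toReal := by
        have h1 : ∀ y, (∑ x, (μ (X ⁻¹' {x} ∩ (Y ⁻¹' {y} ∩ Z ⁻¹' {z}))).toReal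
              * Real.log (μ (Z ⁻¹' {z})).toReal)
            = (μ (Y ⁻¹' {y} ∩ Z ⁻¹' {z})).toReal * Real.log (μ (Z ⁻¹' {z})).toReal := fun y => by
          rw [← Finset.sum_mul]
          exact congrArg (fun t => t * Real.log (μ (Z ⁻¹' {z})).toReal) (hYZ y z).symm
        rw [Finset.sum_congr rfl (fun y _ => h1 y), ← Finset.sum_mul]
        exact congrArg (fun t => t * Real.log (μ (Z ⁻¹' {z})).toReal) (hZZ z).symm
      rw [Real.negMulLog, neg_mul, ← inner, ← Finset.sum_neg_distrib]
      exact Finset.sum_congr rfl fun y _ => (Finset.sum_neg_distrib _).symm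
    rw [step]
    exact Finset.sum_comm.trans
      ((Finset.sum_congr rfl fun y _ => Finset.sum_comm).trans Finset.sum_comm)
  have e3 : Hshannon μ (fun ω => (X ω, Y ω, Z ω)) = ∑ x, ∑ y, ∑ z,
      Real.negMulLog (μ (X ⁻¹' {x} ∩ (Y ⁻¹' {y} ∩ Z ⁻¹' {z}))).toReal := by
    unfold Hshannon
    rw [Fintype.sum_prod_type]
    refine Finset.sum_congr rfl fun x _ => ?_
    rw [Fintype.sum_prod_type]
    exact Finset.sum_congr rfl fun y _ => Finset.sum_congr rfl fun z _ => by rw [pre3]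
  rw [cmi, e1, e2, e3, e4]
  rw [← Finset.sum_add_distrib, ← Finset.sum_sub_distrib, ← Finset.sum_sub_distrib]
  refine Finset.sum_congr rfl fun x _ => ?_
  rw [← Finset.sum_add_distrib, ← Finset.sum_sub_distrib, ← Finset.sum_sub_distrib]
  refine Finset.sum_congr rfl fun y _ => ?_
  rw [← Finset.sum_add_distrib, ← Finset.sum_sub_distrib, ← Finset.sum_sub_distrib]
  refine Finset.sum_congr rfl fun z _ => ?_
  rcases eq_or_lt_of_le (ENNReal.toReal_nonneg :
      (0:ℝ) ≤ (μ (X ⁻¹' {x} ∩ (Y ⁻¹' {y} ∩ Z ⁻¹' {z}))).toReal) with h | h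
  · rw [Real.negMulLog, ← h]; ring
  · have hdxz : 0 < (μ (X ⁻¹' {x} ∩ Z ⁻¹' {z})).toReal :=
      lt_of_lt_of_le h (toReal_dom μ (fun ω hω => ⟨hω.1, hω.2.2⟩))
    have hdyz : 0 < (μ (Y ⁻¹' {y} ∩ Z ⁻¹' {z})).toReal :=
      lt_of_lt_of_le h (toReal_dom μ (fun ω hω => hω.2))
    have hdz : 0 < (μ (Z ⁻¹' {z})).toReal :=
      lt_of_lt_of_le h (toReal_dom μ (fun ω hω => hω.2.2))
    rw [Real.negMulLog,
      Real.log_mul (mul_ne_zero (ne_of_gt hdxz) (ne_of_gt hdyz)) (inv_ne_zero (ne_of_gt hdz)),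
      Real.log_mul (ne_of_gt hdxz) (ne_of_gt hdyz), Real.log_inv]
    ring
end cmirepr
section cmifact
variable {Ω : Type*} [MeasurableSpace Ω] (μ : Measure Ω) [IsProbabilityMeasure μ]
variable {S T U : Type*}
  [Fintype S] [MeasurableSpace S] [MeasurableSingletonClass S]
  [Fintype T] [MeasurableSpace T] [MeasurableSingletonClass T]
  [Fintype U] [MeasurableSpace U] [MeasurableSingletonClass U]
  (X : Ω → S) (Y : Ω → T) (Z : Ω → U)

lemma cmi_fact (hX : Measurable X) (hY : Measurable Y) (hZ : Measurable Z)
    (h : cmi μ X Y Z = 0) :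
    ∀ x y z, (μ (X ⁻¹' {x} ∩ (Y ⁻¹' {y} ∩ Z ⁻¹' {z}))).toReal * (μ (Z ⁻¹' {z})).toReal
      = (μ (X ⁻¹' {x} ∩ Z ⁻¹' {z})).toReal * (μ (Y ⁻¹' {y} ∩ Z ⁻¹' {z})).toReal := by
  have hXm : ∀ x : S, MeasurableSet (X ⁻¹' {x}) := fun x => hX (measurableSet_singleton x)
  have hYm : ∀ y : T, MeasurableSet (Y ⁻¹' {y}) := fun y => hY (measurableSet_singleton y)
  have hZm : ∀ z : U, MeasurableSet (Z ⁻¹' {z}) := fun z => hZ (measurableSet_singleton z)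
  have hXZ : ∀ x z, (μ (X ⁻¹' {x} ∩ Z ⁻¹' {z})).toReal
      = ∑ y, (μ (X ⁻¹' {x} ∩ (Y ⁻¹' {y} ∩ Z ⁻¹' {z}))).toReal := by
    intro x z
    rw [toReal_fiber_sum μ ((hXm x).inter (hZm z)) hY]
    refine Finset.sum_congr rfl fun y _ => ?_
    congr 2
    ext ω; simp only [Set.mem_inter_iff, Set.mem_preimage]; tauto
  have hYZ : ∀ y z, (μ (Y ⁻¹' {y} ∩ Z ⁻¹' {z})).toReal
      = ∑ x, (μ (X ⁻¹' {x} ∩ (Y ⁻¹' {y} ∩ Z ⁻¹' {z}))).toReal := by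
    intro y z
    rw [toReal_fiber_sum μ ((hYm y).inter (hZm z)) hX]
    refine Finset.sum_congr rfl fun x _ => ?_
    congr 2
    ext ω; simp only [Set.mem_inter_iff, Set.mem_preimage]; tauto
  have hZX : ∀ z, (μ (Z ⁻¹' {z})).toReal = ∑ x, (μ (X ⁻¹' {x} ∩ Z ⁻¹' {z})).toReal := by
    intro z
    rw [toReal_fiber_sum μ (hZm z) hX]
    exact Finset.sum_congr rfl fun x _ => by rw [Set.inter_comm]
  have hZY : ∀ z, (μ (Z ⁻¹' {z})).toReal = ∑ y, (μ (Y ⁻¹' {y} ∩ Z ⁻¹' {z})).toReal := by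
    intro z
    rw [toReal_fiber_sum μ (hZm z) hY]
    exact Finset.sum_congr rfl fun y _ => by rw [Set.inter_comm]
  have key := gibbs_eq (ι := S × T × U)
    (fun p => (μ (X ⁻¹' {p.1} ∩ (Y ⁻¹' {p.2.1} ∩ Z ⁻¹' {p.2.2}))).toReal)
    (fun p => (μ (X ⁻¹' {p.1} ∩ Z ⁻¹' {p.2.2})).toReal
      * (μ (Y ⁻¹' {p.2.1} ∩ Z ⁻¹' {p.2.2})).toReal * ((μ (Z ⁻¹' {p.2.2})).toReal)⁻¹)
    (fun _ => ENNReal.toReal_nonneg)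
    (fun _ => mul_nonneg (mul_nonneg ENNReal.toReal_nonneg ENNReal.toReal_nonneg)
      (inv_nonneg.2 ENNReal.toReal_nonneg))
    ?_ ?_ ?_
  · intro x y z
    have hpq := key (x, y, z)
    simp only at hpq
    rw [hpq]
    rcases eq_or_ne ((μ (Z ⁻¹' {z})).toReal) 0 with h0 | h0
    · rw [h0]
      have : (μ (X ⁻¹' {x} ∩ Z ⁻¹' {z})).toReal = 0 :=
        le_antisymm (h0 ▸ toReal_dom μ Set.inter_subset_right) ENNReal.toReal_nonneg
      rw [this]
      ring
    · field_simp
  · rintro ⟨x, y, z⟩ hq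
    simp only at hq ⊢
    rcases mul_eq_zero.1 hq with h0 | h0
    · rcases mul_eq_zero.1 h0 with h1 | h1
      · refine le_antisymm (h1 ▸ toReal_dom μ (fun ω hω => ?_)) ENNReal.toReal_nonneg
        exact ⟨hω.1, hω.2.2⟩
      · exact le_antisymm (h1 ▸ toReal_dom μ (fun ω hω => hω.2)) ENNReal.toReal_nonneg
    · rw [inv_eq_zero] at h0
      exact le_antisymm (h0 ▸ toReal_dom μ (fun ω hω => hω.2.2)) ENNReal.toReal_nonneg
  · -- sum of q ≤ sum of p
    beta_reduce
    have hp1 : ∑ p : S × T × U,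
        (μ (X ⁻¹' {p.1} ∩ (Y ⁻¹' {p.2.1} ∩ Z ⁻¹' {p.2.2}))).toReal = 1 := by
      rw [Fintype.sum_prod_type]
      have h1 : ∀ x, ∑ p : T × U, (μ (X ⁻¹' {x} ∩ (Y ⁻¹' {p.1} ∩ Z ⁻¹' {p.2}))).toReal
          = (μ (X ⁻¹' {x})).toReal := by
        intro x
        rw [toReal_fiber_sum μ (hXm x) (hY.prodMk hZ)]
        refine Finset.sum_congr rfl fun p _ => ?_
        congr 2
        ext ω; simp [Prod.ext_iff]
      rw [Finset.sum_congr rfl fun x _ => h1 x, toReal_mass μ hX]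
    have hrot : ∑ p : S × T × U, (μ (X ⁻¹' {p.1} ∩ Z ⁻¹' {p.2.2})).toReal
          * (μ (Y ⁻¹' {p.2.1} ∩ Z ⁻¹' {p.2.2})).toReal * ((μ (Z ⁻¹' {p.2.2})).toReal)⁻¹
        = ∑ z : U, ∑ x : S, ∑ y : T, (μ (X ⁻¹' {x} ∩ Z ⁻¹' {z})).toReal
          * (μ (Y ⁻¹' {y} ∩ Z ⁻¹' {z})).toReal * ((μ (Z ⁻¹' {z})).toReal)⁻¹ := by
      rw [Fintype.sum_prod_type]
      rw [Finset.sum_congr rfl fun x _ => Fintype.sum_prod_type _]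
      exact (Finset.sum_congr rfl fun x _ => Finset.sum_comm).trans Finset.sum_comm
    have hz : ∀ z : U, (∑ x : S, ∑ y : T, (μ (X ⁻¹' {x} ∩ Z ⁻¹' {z})).toReal
          * (μ (Y ⁻¹' {y} ∩ Z ⁻¹' {z})).toReal * ((μ (Z ⁻¹' {z})).toReal)⁻¹)
        ≤ (μ (Z ⁻¹' {z})).toReal := by
      intro z
      have hform : (∑ x : S, ∑ y : T, (μ (X ⁻¹' {x} ∩ Z ⁻¹' {z})).toReal
            * (μ (Y ⁻¹' {y} ∩ Z ⁻¹' {z})).toReal * ((μ (Z ⁻¹' {z})).toReal)⁻¹)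
          = (μ (Z ⁻¹' {z})).toReal * ((μ (Z ⁻¹' {z})).toReal * ((μ (Z ⁻¹' {z})).toReal)⁻¹) := by
        have hx1 : ∀ x : S, (∑ y : T, (μ (X ⁻¹' {x} ∩ Z ⁻¹' {z})).toReal
              * (μ (Y ⁻¹' {y} ∩ Z ⁻¹' {z})).toReal * ((μ (Z ⁻¹' {z})).toReal)⁻¹)
            = (μ (X ⁻¹' {x} ∩ Z ⁻¹' {z})).toReal
              * ((μ (Z ⁻¹' {z})).toReal * ((μ (Z ⁻¹' {z})).toReal)⁻¹) := by
          intro x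
          rw [Finset.sum_congr rfl fun y _ => mul_assoc
            ((μ (X ⁻¹' {x} ∩ Z ⁻¹' {z})).toReal) ((μ (Y ⁻¹' {y} ∩ Z ⁻¹' {z})).toReal)
            (((μ (Z ⁻¹' {z})).toReal)⁻¹)]
          rw [← Finset.mul_sum, ← Finset.sum_mul, ← hZY z]
        rw [Finset.sum_congr rfl fun x _ => hx1 x, ← Finset.sum_mul, ← hZX z]
      rw [hform]
      rcases eq_or_ne ((μ (Z ⁻¹' {z})).toReal) 0 with h0 | h0
      · rw [h0]; simp
      · rw [mul_inv_cancel₀ h0, mul_one]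
    calc (∑ p : S × T × U, (μ (X ⁻¹' {p.1} ∩ Z ⁻¹' {p.2.2})).toReal
          * (μ (Y ⁻¹' {p.2.1} ∩ Z ⁻¹' {p.2.2})).toReal * ((μ (Z ⁻¹' {p.2.2})).toReal)⁻¹)
        = ∑ z : U, ∑ x : S, ∑ y : T, (μ (X ⁻¹' {x} ∩ Z ⁻¹' {z})).toReal
          * (μ (Y ⁻¹' {y} ∩ Z ⁻¹' {z})).toReal * ((μ (Z ⁻¹' {z})).toReal)⁻¹ := hrot
      _ ≤ ∑ z : U, (μ (Z ⁻¹' {z})).toReal := Finset.sum_le_sum fun z _ => hz z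
      _ = 1 := toReal_mass μ hZ
      _ = ∑ p : S × T × U, (μ (X ⁻¹' {p.1} ∩ (Y ⁻¹' {p.2.1} ∩ Z ⁻¹' {p.2.2}))).toReal := hp1.symm
  · beta_reduce
    rw [show (∑ p : S × T × U,
        (μ (X ⁻¹' {p.1} ∩ (Y ⁻¹' {p.2.1} ∩ Z ⁻¹' {p.2.2}))).toReal
          * (Real.log (μ (X ⁻¹' {p.1} ∩ (Y ⁻¹' {p.2.1} ∩ Z ⁻¹' {p.2.2}))).toReal
            - Real.log ((μ (X ⁻¹' {p.1} ∩ Z ⁻¹' {p.2.2})).toReal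
              * (μ (Y ⁻¹' {p.2.1} ∩ Z ⁻¹' {p.2.2})).toReal * ((μ (Z ⁻¹' {p.2.2})).toReal)⁻¹)))
        = ∑ x : S, ∑ y : T, ∑ z : U,
        (μ (X ⁻¹' {x} ∩ (Y ⁻¹' {y} ∩ Z ⁻¹' {z}))).toReal
          * (Real.log (μ (X ⁻¹' {x} ∩ (Y ⁻¹' {y} ∩ Z ⁻¹' {z}))).toReal
            - Real.log ((μ (X ⁻¹' {x} ∩ Z ⁻¹' {z})).toReal
              * (μ (Y ⁻¹' {y} ∩ Z ⁻¹' {z})).toReal * ((μ (Z ⁻¹' {z})).toReal)⁻¹)) from by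
      rw [Fintype.sum_prod_type]
      exact Finset.sum_congr rfl fun x _ => Fintype.sum_prod_type _]
    rw [← cmi_repr μ X Y Z hX hY hZ]
    exact h
end cmifact
section core

lemma ite_sum {c : Prop} [Decidable c] {ι : Type*} [Fintype ι] (f : ι → ℝ) :
    (if c then (∑ i, f i) else 0) = ∑ i, if c then f i else 0 := by
  split <;> simp

lemma core_comb {SA SX SY SG : Type*} [Fintype SA] [Fintype SX] [Fintype SY] [Fintype SG]
    (mA : SA → ℝ) (mX : SX → ℝ) (mY : SY → ℝ) (mG : SG → ℝ)
    (mXY : SX → SY → ℝ) (mXG : SX → SG → ℝ) (mYG : SY → SG → ℝ) (mAG : SA → SG → ℝ)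
    (mAX : SA → SX → ℝ) (mAY : SA → SY → ℝ)
    (mAXY : SA → SX → SY → ℝ) (mAYG : SA → SY → SG → ℝ) (mXYG : SX → SY → SG → ℝ)
    (nn3 : ∀ x y g, 0 ≤ mXYG x y g)
    (nnAXY : ∀ a x y, 0 ≤ mAXY a x y)
    (nnAYG : ∀ a y g, 0 ≤ mAYG a y g)
    (domAXY : ∀ a x y, mAXY a x y ≤ mXY x y)
    (domAYG : ∀ a y g, mAYG a y g ≤ mYG y g)
    (hmA : ∀ a, mA a = ∑ g, mAG a g)
    (hmX : ∀ x, mX x = ∑ y, mXY x y)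
    (hmY : ∀ y, mY y = ∑ x, mXY x y)
    (hmG : ∀ g, mG g = ∑ y, mYG y g)
    (hmXY : ∀ x y, mXY x y = ∑ g, mXYG x y g)
    (hmXG : ∀ x g, mXG x g = ∑ y, mXYG x y g)
    (hmYG : ∀ y g, mYG y g = ∑ x, mXYG x y g)
    (hmAG : ∀ a g, mAG a g = ∑ y, mAYG a y g)
    (hmAX : ∀ a x, mAX a x = ∑ y, mAXY a x y)
    (hmAY : ∀ a y, mAY a y = ∑ x, mAXY a x y)
    (hmAYg : ∀ a y, mAY a y = ∑ g, mAYG a y g)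
    (hXG : ∀ x g, mXG x g = mX x * mG g)
    (hAYG : ∀ a y g, mAYG a y g * mG g = mAG a g * mYG y g)
    (h3 : ∀ a x y, mAXY a x y * mY y = mAY a y * mXY x y)
    (h4 : ∀ a x y, mAXY a x y * mX x = mAX a x * mXY x y) :
    ∀ a x y, mAXY a x y = mA a * mXY x y := by
  classical
  have nnXY : ∀ x y, 0 ≤ mXY x y := fun x y =>
    (hmXY x y) ▸ Finset.sum_nonneg fun g _ => nn3 x y g
  have nnX : ∀ x, 0 ≤ mX x := fun x => (hmX x) ▸ Finset.sum_nonneg fun y _ => nnXY x y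
  have nnYG : ∀ y g, 0 ≤ mYG y g := fun y g =>
    (hmYG y g) ▸ Finset.sum_nonneg fun x _ => nn3 x y g
  have domXY_X : ∀ x y, mXY x y ≤ mX x := fun x y => by
    rw [hmX x]; exact Finset.single_le_sum (fun y' _ => nnXY x y') (Finset.mem_univ y)
  have domXY_Y : ∀ x y, mXY x y ≤ mY y := fun x y => by
    rw [hmY y]; exact Finset.single_le_sum (fun x' _ => nnXY x' y) (Finset.mem_univ x)
  have domYG_G : ∀ y g, mYG y g ≤ mG g := fun y g => by
    rw [hmG g]; exact Finset.single_le_sum (fun y' _ => nnYG y' g) (Finset.mem_univ y)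
  have dom3_XY : ∀ x y g, mXYG x y g ≤ mXY x y := fun x y g => by
    rw [hmXY x y]; exact Finset.single_le_sum (fun g' _ => nn3 x y g') (Finset.mem_univ g)
  have mXne : ∀ x y, mXY x y ≠ 0 → mX x ≠ 0 := fun x y h h0 =>
    h (le_antisymm (h0 ▸ domXY_X x y) (nnXY x y))
  have mYne : ∀ x y, mXY x y ≠ 0 → mY y ≠ 0 := fun x y h h0 =>
    h (le_antisymm (h0 ▸ domXY_Y x y) (nnXY x y))
  have edge : ∀ a x y, mXY x y ≠ 0 → mAY a y * mX x = mAX a x * mY y := by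
    intro a x y hne
    refine mul_left_cancel₀ hne ?_
    linear_combination (mY y) * (h4 a x y) - (mX x) * (h3 a x y)
  -- main claim
  have claim : ∀ a x0, mX x0 ≠ 0 → mAX a x0 = mA a * mX x0 := by
    intro a x0 hx0
    set step : SX → SX → Prop := fun u v => ∃ y, mXY u y ≠ 0 ∧ mXY v y ≠ 0 with hstep
    set Xc : Set SX := {x | Relation.ReflTransGen step x0 x} with hXc
    have hx0c : x0 ∈ Xc := Relation.ReflTransGen.refl
    have Q : ∀ x, x ∈ Xc → (mAX a x * mX x0 = mAX a x0 * mX x ∧ mX x ≠ 0) := by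
      intro x hx
      induction hx with
      | refl => exact ⟨by ring, hx0⟩
      | tail hab hbc ih =>
        rename_i b c
        obtain ⟨y, hby, hcy⟩ := hbc
        have hb : mX b ≠ 0 := ih.2
        have hc : mX c ≠ 0 := mXne c y hcy
        have hy : mY y ≠ 0 := mYne b y hby
        have e1 := edge a b y hby
        have e2 := edge a c y hcy
        have hedge : mAX a b * mX c = mAX a c * mX b := by
          refine mul_right_cancel₀ hy ?_
          linear_combination (mX b) * e2 - (mX c) * e1
        refine ⟨mul_right_cancel₀ hb ?_, hc⟩
        linear_combination (-(mX x0)) * hedge + (mX c) * ih.1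
    set Yc : Set SY := {y | ∃ x, x ∈ Xc ∧ mXY x y ≠ 0} with hYc
    have mem_iff : ∀ x y, mXY x y ≠ 0 → (x ∈ Xc ↔ y ∈ Yc) := by
      intro x y hxy
      constructor
      · intro hx; exact ⟨x, hx, hxy⟩
      · rintro ⟨x', hx', hx'y⟩
        exact Relation.ReflTransGen.tail hx' ⟨y, hx'y, hxy⟩
    have R : ∀ y, y ∈ Yc → mAY a y * mX x0 = mAX a x0 * mY y := by
      rintro y ⟨x, hxc, hxy⟩
      have hx : mX x ≠ 0 := mXne x y hxy
      have e := edge a x y hxy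
      have q := (Q x hxc).1
      refine mul_right_cancel₀ hx ?_
      linear_combination (mX x0) * e + (mY y) * q
    set P : ℝ := ∑ x, if x ∈ Xc then mX x else 0 with hP
    have F1 : (∑ y, if y ∈ Yc then mY y else 0) = P := by
      have l1 : (∑ y, if y ∈ Yc then mY y else 0)
          = ∑ y, ∑ x, (if y ∈ Yc then mXY x y else 0) := by
        refine Finset.sum_congr rfl fun y _ => ?_
        rw [hmY y, ite_sum]
      have l2 : ∀ x y, (if y ∈ Yc then mXY x y else 0) = (if x ∈ Xc then mXY x y else 0) := by
        intro x y
        rcases eq_or_ne (mXY x y) 0 with h0 | h0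
        · rw [h0]; simp
        · exact if_congr (mem_iff x y h0).symm rfl rfl
      rw [l1, Finset.sum_comm]
      refine Finset.sum_congr rfl fun x _ => ?_
      rw [Finset.sum_congr rfl fun y _ => l2 x y, ← ite_sum, ← hmX x]
    have F2 : ∀ g, (∑ y, if y ∈ Yc then mYG y g else 0) = P * mG g := by
      intro g
      have l1 : (∑ y, if y ∈ Yc then mYG y g else 0)
          = ∑ y, ∑ x, (if y ∈ Yc then mXYG x y g else 0) := by
        refine Finset.sum_congr rfl fun y _ => ?_
        rw [hmYG y g, ite_sum]
      have l2 : ∀ x y, (if y ∈ Yc then mXYG x y g else 0)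
          = (if x ∈ Xc then mXYG x y g else 0) := by
        intro x y
        rcases eq_or_ne (mXYG x y g) 0 with h0 | h0
        · rw [h0]; simp
        · have hxy : mXY x y ≠ 0 := fun hz =>
            h0 (le_antisymm (hz ▸ dom3_XY x y g) (nn3 x y g))
          exact if_congr (mem_iff x y hxy).symm rfl rfl
      rw [l1, Finset.sum_comm]
      have l3 : ∀ x, (∑ y, if x ∈ Xc then mXYG x y g else 0)
          = (if x ∈ Xc then mX x else 0) * mG g := by
        intro x
        rw [← ite_sum, ← hmXG x g, hXG x g]
        split <;> simp
      have l4 : ∀ x, (∑ y, if y ∈ Yc then mXYG x y g else 0)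
          = (if x ∈ Xc then mX x else 0) * mG g := by
        intro x
        rw [Finset.sum_congr rfl fun y _ => l2 x y]
        exact l3 x
      rw [Finset.sum_congr rfl fun x _ => l4 x, ← Finset.sum_mul]
    have F3 : (∑ y, if y ∈ Yc then mAY a y else 0) = mA a * P := by
      have Sg : ∀ g, (∑ y, if y ∈ Yc then mAYG a y g else 0) = mAG a g * P := by
        intro g
        rcases eq_or_ne (mG g) 0 with h0 | h0
        · have z1 : ∀ y, mAYG a y g = 0 := fun y =>
            le_antisymm (le_trans (domAYG a y g) (h0 ▸ domYG_G y g)) (nnAYG a y g)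
          have z2 : mAG a g = 0 := by
            rw [hmAG a g]
            exact Finset.sum_eq_zero fun y _ => z1 y
          rw [z2, zero_mul]
          refine Finset.sum_eq_zero fun y _ => ?_
          rw [z1 y]; simp
        · refine mul_right_cancel₀ h0 ?_
          have l1 : (∑ y, if y ∈ Yc then mAYG a y g else 0) * mG g
              = ∑ y, (if y ∈ Yc then mAYG a y g * mG g else 0) := by
            rw [Finset.sum_mul]
            exact Finset.sum_congr rfl fun y _ => by split <;> simp
          rw [l1]
          have l2 : ∀ y, (if y ∈ Yc then mAYG a y g * mG g else 0)
              = mAG a g * (if y ∈ Yc then mYG y g else 0) := by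
            intro y
            rw [if_congr Iff.rfl (hAYG a y g) rfl]
            split <;> simp
          rw [Finset.sum_congr rfl fun y _ => l2 y, ← Finset.mul_sum, F2 g]
          ring
      have swap : (∑ y, if y ∈ Yc then mAY a y else 0)
          = ∑ g, ∑ y, (if y ∈ Yc then mAYG a y g else 0) := by
        rw [Finset.sum_comm]
        refine Finset.sum_congr rfl fun y _ => ?_
        rw [hmAYg a y, ite_sum]
      rw [swap, Finset.sum_congr rfl fun g _ => Sg g, ← Finset.sum_mul, ← hmA a]
    have F4 : (∑ y, if y ∈ Yc then mAY a y else 0) * mX x0 = mAX a x0 * P := by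
      rw [Finset.sum_mul]
      have l1 : ∀ y, (if y ∈ Yc then mAY a y else 0) * mX x0
          = mAX a x0 * (if y ∈ Yc then mY y else 0) := by
        intro y
        by_cases hy : y ∈ Yc
        · rw [if_pos hy, if_pos hy, R y hy]
        · rw [if_neg hy, if_neg hy]; ring
      rw [Finset.sum_congr rfl fun y _ => l1 y, ← Finset.mul_sum, F1]
    have hPpos : 0 < P := by
      have : mX x0 ≤ P := by
        rw [hP]
        calc mX x0 = (if x0 ∈ Xc then mX x0 else 0) := by rw [if_pos hx0c]
          _ ≤ ∑ x, if x ∈ Xc then mX x else 0 :=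
            Finset.single_le_sum (f := fun x => if x ∈ Xc then mX x else 0)
              (fun x _ => by
                show (0:ℝ) ≤ if x ∈ Xc then mX x else 0
                by_cases h : x ∈ Xc
                · rw [if_pos h]; exact nnX x
                · rw [if_neg h])
              (Finset.mem_univ x0)
      exact lt_of_lt_of_le (lt_of_le_of_ne (nnX x0) (Ne.symm hx0)) this
    refine mul_left_cancel₀ (ne_of_gt hPpos) ?_
    linear_combination (-1) * F4 + (mX x0) * F3
  intro a x y
  rcases eq_or_ne (mXY x y) 0 with hxy | hxy
  · rw [hxy, mul_zero]
    exact le_antisymm (le_trans (domAXY a x y) (le_of_eq hxy)) (nnAXY a x y)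
  · have hx : mX x ≠ 0 := mXne x y hxy
    refine mul_left_cancel₀ hx ?_
    linear_combination h4 a x y + (mXY x y) * (claim a x hx)
end core

/-- **Conditional Ingleton criterion for Intersection, case ii.** -/
theorem cond_ingleton_intersection_ii
    {Ω : Type*} [MeasurableSpace Ω] (μ : Measure Ω) [IsProbabilityMeasure μ]
    {SA SX SY SG : Type*}
    [Fintype SA] [Nonempty SA] [MeasurableSpace SA] [MeasurableSingletonClass SA]
    [Fintype SX] [Nonempty SX] [MeasurableSpace SX] [MeasurableSingletonClass SX]
    [Fintype SY] [Nonempty SY] [MeasurableSpace SY] [MeasurableSingletonClass SY]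
    [Fintype SG] [Nonempty SG] [MeasurableSpace SG] [MeasurableSingletonClass SG]
    (A : Ω → SA) (X : Ω → SX) (Y : Ω → SY) (G : Ω → SG)
    (hA : Measurable A) (hX : Measurable X) (hY : Measurable Y) (hG : Measurable G)
    (hG1 : mutInfo μ X G = 0) (hG2 : cmi μ A Y G = 0)
    (h1 : cmi μ A X Y = 0) (h2 : cmi μ A Y X = 0) :
    mutInfo μ A (fun ω => (X ω, Y ω)) = 0 := by
  have hAm : ∀ a : SA, MeasurableSet (A ⁻¹' {a}) := fun a => hA (measurableSet_singleton a)
  have hXm : ∀ x : SX, MeasurableSet (X ⁻¹' {x}) := fun x => hX (measurableSet_singleton x)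
  have hYm : ∀ y : SY, MeasurableSet (Y ⁻¹' {y}) := fun y => hY (measurableSet_singleton y)
  have hGm : ∀ g : SG, MeasurableSet (G ⁻¹' {g}) := fun g => hG (measurableSet_singleton g)
  have fact := core_comb
    (fun a => (μ (A ⁻¹' {a})).toReal)
    (fun x => (μ (X ⁻¹' {x})).toReal)
    (fun y => (μ (Y ⁻¹' {y})).toReal)
    (fun g => (μ (G ⁻¹' {g})).toReal)
    (fun x y => (μ (X ⁻¹' {x} ∩ Y ⁻¹' {y})).toReal)
    (fun x g => (μ (X ⁻¹' {x} ∩ G ⁻¹' {g})).toReal)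
    (fun y g => (μ (Y ⁻¹' {y} ∩ G ⁻¹' {g})).toReal)
    (fun a g => (μ (A ⁻¹' {a} ∩ G ⁻¹' {g})).toReal)
    (fun a x => (μ (A ⁻¹' {a} ∩ X ⁻¹' {x})).toReal)
    (fun a y => (μ (A ⁻¹' {a} ∩ Y ⁻¹' {y})).toReal)
    (fun a x y => (μ (A ⁻¹' {a} ∩ (X ⁻¹' {x} ∩ Y ⁻¹' {y}))).toReal)
    (fun a y g => (μ (A ⁻¹' {a} ∩ (Y ⁻¹' {y} ∩ G ⁻¹' {g}))).toReal)
    (fun x y g => (μ (X ⁻¹' {x} ∩ (Y ⁻¹' {y} ∩ G ⁻¹' {g}))).toReal)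
    (fun _ _ _ => ENNReal.toReal_nonneg)
    (fun _ _ _ => ENNReal.toReal_nonneg)
    (fun _ _ _ => ENNReal.toReal_nonneg)
    (fun a x y => toReal_dom μ (fun ω h => h.2))
    (fun a y g => toReal_dom μ (fun ω h => h.2))
    (fun a => toReal_fiber_sum μ (hAm a) hG)
    (fun x => toReal_fiber_sum μ (hXm x) hY)
    (fun y => by
      beta_reduce
      rw [toReal_fiber_sum μ (hYm y) hX]
      exact Finset.sum_congr rfl fun x _ => by rw [Set.inter_comm])
    (fun g => by
      beta_reduce
      rw [toReal_fiber_sum μ (hGm g) hY]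
      exact Finset.sum_congr rfl fun y _ => by rw [Set.inter_comm])
    (fun x y => by
      beta_reduce
      rw [toReal_fiber_sum μ ((hXm x).inter (hYm y)) hG]
      refine Finset.sum_congr rfl fun g _ => ?_
      congr 2
      ext ω; simp only [Set.mem_inter_iff, Set.mem_preimage]; tauto)
    (fun x g => by
      beta_reduce
      rw [toReal_fiber_sum μ ((hXm x).inter (hGm g)) hY]
      refine Finset.sum_congr rfl fun y _ => ?_
      congr 2
      ext ω; simp only [Set.mem_inter_iff, Set.mem_preimage]; tauto)
    (fun y g => by
      beta_reduce
      rw [toReal_fiber_sum μ ((hYm y).inter (hGm g)) hX]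
      refine Finset.sum_congr rfl fun x _ => ?_
      congr 2
      ext ω; simp only [Set.mem_inter_iff, Set.mem_preimage]; tauto)
    (fun a g => by
      beta_reduce
      rw [toReal_fiber_sum μ ((hAm a).inter (hGm g)) hY]
      refine Finset.sum_congr rfl fun y _ => ?_
      congr 2
      ext ω; simp only [Set.mem_inter_iff, Set.mem_preimage]; tauto)
    (fun a x => by
      beta_reduce
      rw [toReal_fiber_sum μ ((hAm a).inter (hXm x)) hY]
      refine Finset.sum_congr rfl fun y _ => ?_
      congr 2
      ext ω; simp only [Set.mem_inter_iff, Set.mem_preimage]; tauto)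
    (fun a y => by
      beta_reduce
      rw [toReal_fiber_sum μ ((hAm a).inter (hYm y)) hX]
      refine Finset.sum_congr rfl fun x _ => ?_
      congr 2
      ext ω; simp only [Set.mem_inter_iff, Set.mem_preimage]; tauto)
    (fun a y => by
      beta_reduce
      rw [toReal_fiber_sum μ ((hAm a).inter (hYm y)) hG]
      refine Finset.sum_congr rfl fun g _ => ?_
      congr 2
      ext ω; simp only [Set.mem_inter_iff, Set.mem_preimage]; tauto)
    (mutInfo_fact μ X G hX hG hG1)
    (cmi_fact μ A Y G hA hY hG hG2)
    (cmi_fact μ A X Y hA hX hY h1)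
    (fun a x y => by
      have h := cmi_fact μ A Y X hA hY hX h2 a y x
      have e1 : A ⁻¹' {a} ∩ (Y ⁻¹' {y} ∩ X ⁻¹' {x}) = A ⁻¹' {a} ∩ (X ⁻¹' {x} ∩ Y ⁻¹' {y}) := by
        ext ω; simp only [Set.mem_inter_iff, Set.mem_preimage]; tauto
      have e2 : Y ⁻¹' {y} ∩ X ⁻¹' {x} = X ⁻¹' {x} ∩ Y ⁻¹' {y} := Set.inter_comm _ _
      rw [e1, e2] at h
      exact h)
  refine mutInfo_zero_of_fact μ A (fun ω => (X ω, Y ω)) hA (hX.prodMk hY) ?_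
  intro a p
  have hW : (fun ω => (X ω, Y ω)) ⁻¹' {p} = X ⁻¹' {p.1} ∩ Y ⁻¹' {p.2} := by
    ext ω; simp [Prod.ext_iff]
  rw [hW, show A ⁻¹' {a} ∩ (X ⁻¹' {p.1} ∩ Y ⁻¹' {p.2})
      = A ⁻¹' {a} ∩ (X ⁻¹' {p.1} ∩ Y ⁻¹' {p.2}) from rfl]
  exact fact a p.1 p.2
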